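/- arXiv:2207.03892 — 5 statements merged into one kernel-verified Lean document; each statement's English description precedes it below -/
import Mathlib

section
/- Let AS be an axiomatic system on a type Φ of formulas. Then the relation ⊢ʳ_AS of relevant tree-proof derivability is the least consequence relation on Φ containing AS: ⊢ʳ_AS is a consequence relation, every consecution (Γ, φ) ∈ AS satisfies Γ ⊢ʳ_AS φ, and for every consequence relation ⊢ with AS ⊆ ⊢ we have ⊢ʳ_AS ⊆ ⊢. -/
/-- A consequence relation on a type `Φ` of formulas. -/
def IsConseq {Φ : Type*} (C : Multiset Φ → Φ → Prop) : Prop :=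
  (∀ φ : Φ, C {φ} φ) ∧
  (∀ (Γ Δ : Multiset Φ) (ψ φ : Φ), C (Γ + {ψ}) φ → C Δ ψ → C (Γ + Δ) φ)

/-- Monotonicity. -/
def IsMonotone {Φ : Type*} (C : Multiset Φ → Φ → Prop) : Prop :=
  ∀ (Γ Δ : Multiset Φ) (φ : Φ), C Γ φ → C (Γ + Δ) φ

/-- `TDer AS Λ φ` holds iff there is a finite tree labeled by formulas whose root
is labeled `φ`, whose multiset of leaf labels is `Λ`, and such that each non-leaf
node labeled `ψ` whose immediate predecessors carry the multiset of labels `Δ`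
satisfies `(Δ, ψ) ∈ AS` (nodes with an empty multiset of predecessors that are
instances of axioms `(0, ψ) ∈ AS` are leaves labeled by axioms, contributing
nothing to `Λ`; the leaves counted in `Λ` are the remaining ones).
A `leaf` is a single-node tree; a `rule` node has a multiset of immediate subtrees,
encoded by the multiset `L` of pairs (leaf-label multiset of the subtree, root label
of the subtree). -/
inductive TDer {Φ : Type*} (AS : Set (Multiset Φ × Φ)) : Multiset Φ → Φ → Prop where
  | leaf (φ : Φ) : TDer AS {φ} φ
  | rule (L : Multiset (Multiset Φ × Φ)) (φ : Φ)
      (hmem : (Multiset.map Prod.snd L, φ) ∈ AS)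
      (hsub : ∀ p ∈ L, TDer AS p.1 p.2) :
      TDer AS (Multiset.map Prod.fst L).sum φ

/-- `Γ ⊢_AS φ`: there is a tree-proof of `φ` from `Γ` in `AS`: a locally correct
tree with root `φ` whose multiset `Λ` of leaf labels satisfies `Λ ≤ Γ ⊎ Δ` for some
finite multiset `Δ` of axioms of `AS` (i.e., each formula that is not an axiom
labels at most `Γ(χ)` leaves). -/
def TProv {Φ : Type*} (AS : Set (Multiset Φ × Φ)) (Γ : Multiset Φ) (φ : Φ) : Prop :=
  ∃ Λ Δ : Multiset Φ, TDer AS Λ φ ∧ (∀ δ ∈ Δ, ((0 : Multiset Φ), δ) ∈ AS) ∧ Λ ≤ Γ + Δ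

/-- `Γ ⊢ʳ_AS φ`: there is a relevant tree-proof of `φ` from `Γ` in `AS`: a locally
correct tree with root `φ` whose multiset of leaf labels equals `Γ ⊎ Δ` for some
finite multiset `Δ` of axioms of `AS`. -/
def RTProv {Φ : Type*} (AS : Set (Multiset Φ × Φ)) (Γ : Multiset Φ) (φ : Φ) : Prop :=
  ∃ Λ Δ : Multiset Φ, TDer AS Λ φ ∧ (∀ δ ∈ Δ, ((0 : Multiset Φ), δ) ∈ AS) ∧ Λ = Γ + Δ

lemma mem_msum {Φ : Type*} (s : Multiset (Multiset Φ)) (a : Φ) :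
    a ∈ s.sum ↔ ∃ t ∈ s, a ∈ t := by
  induction s using Multiset.induction with
  | empty => simp
  | cons b s ih => simp [ih]

lemma tder_eq {Φ : Type*} {AS : Set (Multiset Φ × Φ)} {Λ Λ' : Multiset Φ} {φ : Φ}
    (h : TDer AS Λ φ) (e : Λ = Λ') : TDer AS Λ' φ := e ▸ h

lemma sum_map_singleton {Φ : Type*} (Γ : Multiset Φ) :
    (Multiset.map Prod.fst (Multiset.map (fun γ => (({γ} : Multiset Φ), γ)) Γ)).sum = Γ := by
  induction Γ using Multiset.induction with
  | empty => simp
  | cons a Γ ih => simp only [Multiset.map_cons, Multiset.sum_cons] at ih ⊢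
                   rw [ih, Multiset.singleton_add]

lemma tder_cut {Φ : Type*} [DecidableEq Φ] {AS : Set (Multiset Φ × Φ)} {Λ : Multiset Φ} {φ : Φ}
    (h : TDer AS Λ φ) :
    ∀ ψ ∈ Λ, ∀ Λ' : Multiset Φ, TDer AS Λ' ψ → TDer AS (Λ.erase ψ + Λ') φ := by
  induction h with
  | leaf φ =>
    intro ψ hψ Λ' h'
    rw [Multiset.mem_singleton] at hψ
    subst hψ
    simpa using h'
  | rule L φ hmem hsub ih =>
    intro ψ hψ Λ' h'
    rw [mem_msum] at hψ
    obtain ⟨t, ht, hψt⟩ := hψ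
    rw [Multiset.mem_map] at ht
    obtain ⟨p, hp, rfl⟩ := ht
    have hnew : TDer AS (p.1.erase ψ + Λ') p.2 := ih p hp ψ hψt Λ' h'
    set L'' : Multiset (Multiset Φ × Φ) := (p.1.erase ψ + Λ', p.2) ::ₘ L.erase p with hL''
    have hLp : p ::ₘ L.erase p = L := Multiset.cons_erase hp
    have hsnd : (Multiset.map Prod.snd L'', φ) ∈ AS := by
      have : Multiset.map Prod.snd L'' = Multiset.map Prod.snd L := by
        rw [hL'', ← hLp]; simp
      rw [this]; exact hmem
    have hsub'' : ∀ q ∈ L'', TDer AS q.1 q.2 := by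
      intro q hq
      rw [hL'', Multiset.mem_cons] at hq
      rcases hq with rfl | hq
      · exact hnew
      · exact hsub q (Multiset.mem_of_mem_erase hq)
    refine tder_eq (TDer.rule L'' φ hsnd hsub'') ?_
    rw [hL'']
    rw [← hLp]
    simp only [Multiset.map_cons, Multiset.sum_cons, Multiset.erase_cons_head,
      Multiset.map_cons]
    rw [Multiset.erase_add_left_pos _ hψt]
    ac_rfl

lemma conseq_fold {Φ : Type*} {C : Multiset Φ → Φ → Prop} (hC : IsConseq C) :
    ∀ L : Multiset (Multiset Φ × Φ), (∀ p ∈ L, C p.1 p.2) →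
      ∀ (Γ0 : Multiset Φ) (φ : Φ), C (Γ0 + Multiset.map Prod.snd L) φ →
        C (Γ0 + (Multiset.map Prod.fst L).sum) φ := by
  intro L
  induction L using Multiset.induction with
  | empty => intro _ Γ0 φ h; simpa using h
  | cons p L ih =>
    intro hsub Γ0 φ h
    simp only [Multiset.map_cons, Multiset.sum_cons] at h ⊢
    have h1 : C ((Γ0 + Multiset.map Prod.snd L) + {p.2}) φ := by
      refine (show Γ0 + (p.2 ::ₘ Multiset.map Prod.snd L)
        = Γ0 + Multiset.map Prod.snd L + {p.2} from ?_) ▸ h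
      rw [← Multiset.singleton_add]; ac_rfl
    have h2 : C (Γ0 + Multiset.map Prod.snd L + p.1) φ :=
      hC.2 _ _ _ _ h1 (hsub p (Multiset.mem_cons_self p L))
    have h3 : C ((Γ0 + p.1) + Multiset.map Prod.snd L) φ := by
      refine (show Γ0 + Multiset.map Prod.snd L + p.1
        = Γ0 + p.1 + Multiset.map Prod.snd L from ?_) ▸ h2
      ac_rfl
    have h4 := ih (fun q hq => hsub q (Multiset.mem_cons_of_mem hq)) (Γ0 + p.1) φ h3
    refine (show Γ0 + p.1 + (Multiset.map Prod.fst L).sum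
      = Γ0 + (p.1 + (Multiset.map Prod.fst L).sum) from ?_) ▸ h4
    ac_rfl

lemma tder_conseq {Φ : Type*} {AS : Set (Multiset Φ × Φ)} {C : Multiset Φ → Φ → Prop}
    (hC : IsConseq C) (hAS : ∀ (Γ : Multiset Φ) (φ : Φ), (Γ, φ) ∈ AS → C Γ φ)
    {Λ : Multiset Φ} {φ : Φ} (h : TDer AS Λ φ) : C Λ φ := by
  induction h with
  | leaf φ => exact hC.1 φ
  | rule L φ hmem hsub ih =>
    have h0 : C (0 + Multiset.map Prod.snd L) φ := by
      rw [zero_add]; exact hAS _ _ hmem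
    have := conseq_fold hC L ih 0 φ h0
    rwa [zero_add] at this

/-- `⊢ʳ_AS` is the least consequence relation containing `AS`. -/
theorem rtprov_least_conseq {Φ : Type*} (AS : Set (Multiset Φ × Φ)) :
    IsConseq (RTProv AS) ∧
    (∀ (Γ : Multiset Φ) (φ : Φ), (Γ, φ) ∈ AS → RTProv AS Γ φ) ∧
    (∀ C : Multiset Φ → Φ → Prop, IsConseq C →
      (∀ (Γ : Multiset Φ) (φ : Φ), (Γ, φ) ∈ AS → C Γ φ) →
      ∀ (Γ : Multiset Φ) (φ : Φ), RTProv AS Γ φ → C Γ φ) := by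
  classical
  refine ⟨⟨?_, ?_⟩, ?_, ?_⟩
  · intro φ
    exact ⟨{φ}, 0, TDer.leaf φ, by simp, by simp⟩
  · rintro Γ Δ ψ φ ⟨Λ1, Δ1, h1, hax1, he1⟩ ⟨Λ2, Δ2, h2, hax2, he2⟩
    have hmem : ψ ∈ Λ1 := by
      rw [he1]; exact Multiset.mem_add.2 (Or.inl (Multiset.mem_add.2 (Or.inr (by simp))))
    have hcut := tder_cut h1 ψ hmem Λ2 h2
    refine ⟨Λ1.erase ψ + Λ2, Δ1 + Δ2, hcut, ?_, ?_⟩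
    · intro δ hδ
      rcases Multiset.mem_add.1 hδ with h | h
      · exact hax1 δ h
      · exact hax2 δ h
    · rw [he1, he2]
      have e : Γ + {ψ} + Δ1 = ψ ::ₘ (Γ + Δ1) := by
        rw [← Multiset.singleton_add]; ac_rfl
      rw [e, Multiset.erase_cons_head]
      ac_rfl
  · intro Γ φ hmem
    refine ⟨Γ, 0, ?_, by simp, by simp⟩
    have h := TDer.rule (Multiset.map (fun γ => (({γ} : Multiset Φ), γ)) Γ) φ
      (by simpa [Multiset.map_map, Function.comp] using hmem)
      (by intro p hp
          rw [Multiset.mem_map] at hp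
          obtain ⟨γ, _, rfl⟩ := hp
          exact TDer.leaf γ)
    exact tder_eq h (sum_map_singleton Γ)
  · rintro C hC hAS Γ φ ⟨Λ, Δ, h, hax, rfl⟩
    have hCΛ : C (Γ + Δ) φ := tder_conseq hC hAS h
    clear h
    induction Δ using Multiset.induction with
    | empty => simpa using hCΛ
    | cons δ Δ ih =>
      refine ih (fun d hd => hax d (Multiset.mem_cons_of_mem hd)) ?_
      have h1 : C ((Γ + Δ) + {δ}) φ := by
        refine (show Γ + (δ ::ₘ Δ) = Γ + Δ + {δ} from ?_) ▸ hCΛ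
        rw [← Multiset.singleton_add]; ac_rfl
      have h2 := hC.2 _ 0 _ _ h1 ?_
      · simpa using h2
      · have := hAS 0 δ (hax δ (Multiset.mem_cons_self δ Δ))
        exact this
end

section
/- (Łoś–Suszko theorem for relevant consequence.) Every consequence relation ⊢ on a type Φ of formulas has a relevant presentation; indeed, viewing ⊢ itself as an axiomatic system, ⊢ = ⊢ʳ_⊢. Moreover, every monotone consequence relation ⊢ on Φ has a presentation; indeed ⊢ = ⊢_⊢. -/
section
variable {Φ : Type*} {C : Multiset Φ → Φ → Prop}

lemma aux_cuts (hC : IsConseq C) (L : Multiset (Multiset Φ × Φ))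
    (hsub : ∀ p ∈ L, C p.1 p.2) :
    ∀ (Δ : Multiset Φ) (φ : Φ), C (Multiset.map Prod.snd L + Δ) φ →
      C ((Multiset.map Prod.fst L).sum + Δ) φ := by
  induction L using Multiset.induction with
  | empty => simp
  | cons p L ih =>
      intro Δ φ h
      have h1 : C ((Multiset.map Prod.snd L + Δ) + {p.2}) φ := by
        have : Multiset.map Prod.snd (p ::ₘ L) + Δ
            = (Multiset.map Prod.snd L + Δ) + {p.2} := by
          simp only [Multiset.map_cons, Multiset.cons_add]
          rw [add_comm (Multiset.map Prod.snd L + Δ), Multiset.singleton_add]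
        rwa [this] at h
      have h2 := hC.2 _ _ _ _ h1 (hsub p (Multiset.mem_cons_self p L))
      have h3 := ih (fun q hq => hsub q (Multiset.mem_cons_of_mem hq)) (Δ + p.1) φ
        (by rwa [← add_assoc])
      have : (Multiset.map Prod.fst (p ::ₘ L)).sum + Δ
          = (Multiset.map Prod.fst L).sum + (Δ + p.1) := by
        simp only [Multiset.map_cons, Multiset.sum_cons]
        abel
      rw [this]; exact h3

lemma aux_tder (hC : IsConseq C) {Λ : Multiset Φ} {φ : Φ}
    (h : TDer {p : Multiset Φ × Φ | C p.1 p.2} Λ φ) : C Λ φ := by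
  induction h with
  | leaf φ => exact hC.1 φ
  | rule L φ hmem hsub ih =>
      have := aux_cuts hC L ih 0 φ (by simpa using hmem)
      simpa using this

lemma aux_axcut (hC : IsConseq C) (Δ : Multiset Φ) :
    ∀ (Γ : Multiset Φ) (φ : Φ), (∀ δ ∈ Δ, C 0 δ) → C (Γ + Δ) φ → C Γ φ := by
  induction Δ using Multiset.induction with
  | empty => simp
  | cons δ Δ ih =>
      intro Γ φ hax h
      refine ih Γ φ (fun d hd => hax d (Multiset.mem_cons_of_mem hd)) ?_
      have h1 : C ((Γ + Δ) + {δ}) φ := by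
        have : Γ + (δ ::ₘ Δ) = (Γ + Δ) + {δ} := by
          rw [add_comm (Γ + Δ), Multiset.singleton_add, ← Multiset.cons_add, Multiset.cons_add]; rw [Multiset.add_cons]
        rwa [this] at h
      have := hC.2 _ _ _ _ h1 (hax δ (Multiset.mem_cons_self δ Δ))
      simpa using this

lemma aux_fwd (hC : IsConseq C) {Γ : Multiset Φ} {φ : Φ} (h : C Γ φ) :
    TDer {p : Multiset Φ × Φ | C p.1 p.2} Γ φ := by
  have key := TDer.rule (AS := {p : Multiset Φ × Φ | C p.1 p.2})
    (Multiset.map (fun γ => (({γ} : Multiset Φ), γ)) Γ) φ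
    (by simpa [Multiset.map_map, Function.comp] using h)
    (by intro p hp
        simp only [Multiset.mem_map] at hp
        obtain ⟨γ, _, rfl⟩ := hp
        exact TDer.leaf γ)
  have : (Multiset.map Prod.fst (Multiset.map (fun γ => (({γ} : Multiset Φ), γ)) Γ)).sum = Γ := by
    simp [Multiset.map_map, Function.comp]
  rwa [this] at key

end

/-- Łoś–Suszko: every consequence relation, viewed as an axiomatic
system, is its own relevant presentation; every monotone consequence relation is
its own presentation. -/
theorem los_suszko {Φ : Type*} (C : Multiset Φ → Φ → Prop) (hC : IsConseq C) :
    C = RTProv {p : Multiset Φ × Φ | C p.1 p.2} ∧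
    (IsMonotone C → C = TProv {p : Multiset Φ × Φ | C p.1 p.2}) := by
  constructor
  · funext Γ φ
    apply propext
    constructor
    · intro h
      exact ⟨Γ, 0, aux_fwd hC h, by simp, by simp⟩
    · rintro ⟨Λ, Δ, hder, hax, rfl⟩
      exact aux_axcut hC Δ Γ φ (fun δ hδ => hax δ hδ) (aux_tder hC hder)
  · intro hmono
    funext Γ φ
    apply propext
    constructor
    · intro h
      exact ⟨Γ, 0, aux_fwd hC h, by simp, by simp⟩
    · rintro ⟨Λ, Δ, hder, hax, hle⟩
      obtain ⟨E, hE⟩ := Multiset.le_iff_exists_add.mp hle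
      have := hmono Λ E φ (aux_tder hC hder)
      rw [← hE] at this
      exact aux_axcut hC Δ Γ φ (fun δ hδ => hax δ hδ) this
end

section
/- (Deduction theorem for BCI.) For every finite multiset Γ of BCI-formulas and all BCI-formulas φ, ψ: Γ ⊎ [φ] ⊢ʳ_BCI ψ if and only if Γ ⊢ʳ_BCI φ → ψ. -/
/-- BCI-formulas: built from countably many propositional variables by the
binary connectives `→` (imp) and `∘` (fus). -/
inductive BForm : Type where
  | var : ℕ → BForm
  | imp : BForm → BForm → BForm
  | fus : BForm → BForm → BForm

open BForm

/-- The axiomatic system BCI (with fusion): the axiom schemes (I), (B), (C),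
(Res₁), (Res₂) (each with empty premise multiset), together with the rule (mp)
with premise multiset `[φ→ψ, φ]` and conclusion `ψ`. -/
def BCI : Set (Multiset BForm × BForm) :=
  { c | (∃ φ, c = (0, imp φ φ)) ∨
        (∃ φ ψ χ, c = (0, imp (imp φ ψ) (imp (imp χ φ) (imp χ ψ)))) ∨
        (∃ φ ψ χ, c = (0, imp (imp φ (imp ψ χ)) (imp ψ (imp φ χ)))) ∨
        (∃ φ ψ χ, c = (0, imp (imp (fus φ ψ) χ) (imp φ (imp ψ χ)))) ∨
        (∃ φ ψ χ, c = (0, imp (imp φ (imp ψ χ)) (imp (fus φ ψ) χ))) ∨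
        (∃ φ ψ, c = ({imp φ ψ, φ}, ψ)) }

deriving instance DecidableEq for BForm

private lemma ax_der {δ : BForm} (h : ((0 : Multiset BForm), δ) ∈ BCI) :
    TDer BCI 0 δ := by
  have := TDer.rule (AS := BCI) 0 δ (by simpa using h) (by simp)
  simpa using this

private lemma mp_der {Λ₁ Λ₂ : Multiset BForm} {α β : BForm}
    (h1 : TDer BCI Λ₁ (imp α β)) (h2 : TDer BCI Λ₂ α) :
    TDer BCI (Λ₁ + Λ₂) β := by
  have := TDer.rule (AS := BCI) {(Λ₁, imp α β), (Λ₂, α)} β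
    (by simp only [Multiset.insert_eq_cons, Multiset.map_cons, Multiset.map_singleton]
        exact Or.inr (Or.inr (Or.inr (Or.inr (Or.inr ⟨α, β, rfl⟩))))) ?_
  · simpa using this
  · intro p hp
    simp only [Multiset.insert_eq_cons, Multiset.mem_cons, Multiset.mem_singleton] at hp
    rcases hp with rfl | rfl <;> assumption

private lemma no_hyp_ax {L : Multiset (Multiset BForm × BForm)} {Λ₀ : Multiset BForm}
    {φ : BForm} (hL : Multiset.map Prod.snd L = 0)
    (heq : (Multiset.map Prod.fst L).sum = Λ₀ + {φ}) : False := by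
  rw [Multiset.map_eq_zero] at hL
  subst hL
  simp only [Multiset.map_zero, Multiset.sum_zero] at heq
  have := congrArg Multiset.card heq
  simp at this

private lemma ded_core {Λ : Multiset BForm} {ψ : BForm} (h : TDer BCI Λ ψ) :
    ∀ {Λ₀ : Multiset BForm} {φ : BForm}, Λ = Λ₀ + {φ} →
    ∃ M Δ : Multiset BForm, TDer BCI M (imp φ ψ) ∧
      (∀ δ ∈ Δ, ((0 : Multiset BForm), δ) ∈ BCI) ∧ M = Λ₀ + Δ := by
  induction h with
  | leaf χ =>
    intro Λ₀ φ heq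
    have hc : (1 : ℕ) = Multiset.card Λ₀ + 1 := by
      simpa using congrArg Multiset.card heq
    have hΛ0 : Λ₀ = 0 := by
      have : Multiset.card Λ₀ = 0 := by omega
      simpa using this
    subst hΛ0
    have hφ : φ = χ := by simpa using heq.symm
    subst hφ
    exact ⟨0, 0, ax_der (Or.inl ⟨φ, rfl⟩), by simp, by simp⟩
  | rule L χ hmem hsub ih =>
    intro Λ₀ φ heq
    rcases hmem with ⟨α, hax⟩ | ⟨α, β, γ, hax⟩ | ⟨α, β, γ, hax⟩ | ⟨α, β, γ, hax⟩ |
        ⟨α, β, γ, hax⟩ | ⟨α, β, hax⟩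
    · exact absurd heq (fun heq => no_hyp_ax (congrArg Prod.fst hax) heq)
    · exact absurd heq (fun heq => no_hyp_ax (congrArg Prod.fst hax) heq)
    · exact absurd heq (fun heq => no_hyp_ax (congrArg Prod.fst hax) heq)
    · exact absurd heq (fun heq => no_hyp_ax (congrArg Prod.fst hax) heq)
    · exact absurd heq (fun heq => no_hyp_ax (congrArg Prod.fst hax) heq)
    · -- mp case
      have hχ : χ = β := by have := congrArg Prod.snd hax; simpa using this
      subst hχ
      have hsnd : Multiset.map Prod.snd L = imp α χ ::ₘ {α} := by
        have := congrArg Prod.fst hax; simpa using this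
      obtain ⟨p, hpL, hp2, hrest⟩ := (Multiset.map_eq_cons _ _ _ _).mpr hsnd
      obtain ⟨q, hqL, hq2, hrest2⟩ := (Multiset.map_eq_cons _ _ _ _).mpr (by
        rw [Multiset.cons_zero]; simpa using hrest)
      have hL : L = p ::ₘ q ::ₘ 0 := by
        rw [Multiset.map_eq_zero] at hrest2
        rw [← Multiset.cons_erase hpL, ← Multiset.cons_erase hqL, hrest2]
      have hsum : p.1 + q.1 = Λ₀ + {φ} := by
        rw [hL] at heq; simpa using heq
      have hp : TDer BCI p.1 p.2 := hsub p hpL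
      have hq : TDer BCI q.1 q.2 := hsub q (hL ▸ Multiset.mem_cons_of_mem (Multiset.mem_cons_self _ _))
      have hφmem : φ ∈ p.1 + q.1 := by rw [hsum]; simp
      rcases Multiset.mem_add.mp hφmem with hφp | hφq
      · -- φ in major premise leaves
        obtain ⟨E, hp1⟩ : ∃ E, p.1 = E + {φ} :=
          ⟨p.1.erase φ, by rw [add_comm, Multiset.singleton_add, Multiset.cons_erase hφp]⟩
        obtain ⟨M, Δ, hM, hΔ, hMeq⟩ := ih p hpL hp1
        rw [hp2] at hM
        -- hM : TDer M (imp φ (imp α χ)); use C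
        have hC : TDer BCI 0 (imp (imp φ (imp α χ)) (imp α (imp φ χ))) :=
          ax_der (Or.inr (Or.inr (Or.inl ⟨φ, α, χ, rfl⟩)))
        have h1 : TDer BCI M (imp α (imp φ χ)) := by
          have := mp_der hC hM; simpa using this
        have h2 : TDer BCI (M + q.1) (imp φ χ) := mp_der h1 (hq2 ▸ hq)
        refine ⟨M + q.1, Δ, h2, hΔ, ?_⟩
        have hcancel : E + q.1 = Λ₀ := by
          refine add_right_cancel (b := ({φ} : Multiset BForm)) ?_
          rw [← hsum, hp1]; abel
        rw [hMeq, ← hcancel]; abel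
      · -- φ in minor premise leaves
        obtain ⟨E, hq1⟩ : ∃ E, q.1 = E + {φ} :=
          ⟨q.1.erase φ, by rw [add_comm, Multiset.singleton_add, Multiset.cons_erase hφq]⟩
        obtain ⟨M, Δ, hM, hΔ, hMeq⟩ := ih q (hL ▸ Multiset.mem_cons_of_mem (Multiset.mem_cons_self _ _)) hq1
        rw [hq2] at hM
        -- hM : TDer M (imp φ α); use B : (α→χ)→((φ→α)→(φ→χ))
        have hB : TDer BCI 0 (imp (imp α χ) (imp (imp φ α) (imp φ χ))) :=
          ax_der (Or.inr (Or.inl ⟨α, χ, φ, rfl⟩))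
        have h1 : TDer BCI p.1 (imp (imp φ α) (imp φ χ)) := by
          have := mp_der hB (hp2 ▸ hp); simpa using this
        have h2 : TDer BCI (p.1 + M) (imp φ χ) := mp_der h1 hM
        refine ⟨p.1 + M, Δ, h2, hΔ, ?_⟩
        have hcancel : p.1 + E = Λ₀ := by
          refine add_right_cancel (b := ({φ} : Multiset BForm)) ?_
          rw [← hsum, hq1]; abel
        rw [hMeq, ← hcancel]; abel


/-- Deduction theorem for BCI:
`Γ ⊎ [φ] ⊢ʳ_BCI ψ` iff `Γ ⊢ʳ_BCI φ → ψ`. -/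
theorem bci_deduction_theorem (Γ : Multiset BForm) (φ ψ : BForm) :
    RTProv BCI (Γ + {φ}) ψ ↔ RTProv BCI Γ (imp φ ψ) := by
  constructor
  · rintro ⟨Λ, Δ, hΛ, hΔ, rfl⟩
    obtain ⟨M, Δ', hM, hΔ', hMeq⟩ :=
      ded_core hΛ (Λ₀ := Γ + Δ) (φ := φ) (by abel)
    exact ⟨M, Δ' + Δ, hM, fun δ hδ => by
      rcases Multiset.mem_add.mp hδ with h | h
      exacts [hΔ' δ h, hΔ δ h], by rw [hMeq]; abel⟩
  · rintro ⟨Λ, Δ, hΛ, hΔ, rfl⟩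
    refine ⟨Γ + Δ + {φ}, Δ, ?_, hΔ, by abel⟩
    have := mp_der hΛ (TDer.leaf φ)
    simpa using this
end

section
/- Let AS be a symmetric axiomatic system on a type Φ of formulas. Then the relation ⊢ʳ_AS of relevant derivability is the least symmetric consequence relation containing AS, and the relation ⊢_AS of derivability is the least monotone symmetric consequence relation containing AS. -/
/-- Contractivity for consequence relations. -/
def IsContractive {Φ : Type*} (C : Multiset Φ → Φ → Prop) : Prop :=
  ∀ (Γ : Multiset Φ) (ψ φ : Φ), C (Γ + {ψ, ψ}) φ → C (Γ + {ψ}) φ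

/-- A symmetric consequence relation: a binary relation on finite multisets of
formulas satisfying Reflexivity, Transitivity, and Compatibility. -/
def IsSymConseq {Φ : Type*} (S : Multiset Φ → Multiset Φ → Prop) : Prop :=
  (∀ Γ : Multiset Φ, S Γ Γ) ∧
  (∀ Γ Δ Ψ : Multiset Φ, S Γ Δ → S Δ Ψ → S Γ Ψ) ∧
  (∀ Γ Δ Ψ : Multiset Φ, S Γ Δ → S (Γ + Ψ) (Δ + Ψ))

/-- Monotonicity for symmetric consequence relations. -/
def IsSymMonotone {Φ : Type*} (S : Multiset Φ → Multiset Φ → Prop) : Prop :=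
  ∀ Γ Δ Ψ : Multiset Φ, S Γ Δ → S (Γ + Ψ) Δ

/-- Contractivity (left and right) for symmetric consequence relations. -/
def IsSymContractive {Φ : Type*} (S : Multiset Φ → Multiset Φ → Prop) : Prop :=
  (∀ (Γ Δ : Multiset Φ) (ψ : Φ), S (Γ + {ψ, ψ}) Δ → S (Γ + {ψ}) Δ) ∧
  (∀ (Γ Δ : Multiset Φ) (ψ : Φ), S Γ (Δ + {ψ, ψ}) → S Γ (Δ + {ψ}))

/-- The symmetrization `⊢ˢ` of a consequence relation `C`: for a nonempty
conclusion multiset `Δ = [χ₁, …, χₙ]` (n ≥ 1), `Γ ⊢ˢ Δ` iff `Γ` splits as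
`Γ₁ ⊎ … ⊎ Γₙ` with `Γᵢ ⊢ χᵢ` for each `i` (encoded by a multiset `L` of pairs
`(Γᵢ, χᵢ)`); and `Γ ⊢ˢ []` iff `Γ ⊢ χ` for every theorem `χ` of `C`. -/
def Symm {Φ : Type*} (C : Multiset Φ → Φ → Prop) (Γ Δ : Multiset Φ) : Prop :=
  (Δ = 0 ∧ ∀ χ : Φ, C 0 χ → C Γ χ) ∨
  (Δ ≠ 0 ∧ ∃ L : Multiset (Multiset Φ × Φ),
    Multiset.map Prod.snd L = Δ ∧ (Multiset.map Prod.fst L).sum = Γ ∧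
    ∀ p ∈ L, C p.1 p.2)

/-- The asymmetric variant `⊢ᵃ` of a symmetric consequence relation. -/
def Asym {Φ : Type*} (S : Multiset Φ → Multiset Φ → Prop) (Γ : Multiset Φ) (φ : Φ) : Prop :=
  S Γ {φ}

/-- One derivation step in a symmetric axiomatic system `AS`: apply a rule
`(Ψ, Ψ') ∈ AS` with `Ψ ≤ X`, passing from `X` to `(X − Ψ) ⊎ Ψ'` (here the
remainder `X − Ψ` is witnessed by `Z`, i.e. `X = Z ⊎ Ψ` and the result is
`Z ⊎ Ψ'`; this packages both `Ψ ≤ X` and truncated difference). -/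
def Step {Φ : Type*} (AS : Set (Multiset Φ × Multiset Φ)) (X Y : Multiset Φ) : Prop :=
  ∃ Ψ Ψ' Z : Multiset Φ, (Ψ, Ψ') ∈ AS ∧ X = Z + Ψ ∧ Y = Z + Ψ'

/-- `Γ ⊢ʳ_AS Δ`: there is a relevant derivation of `Δ` from `Γ` in `AS`, i.e.,
a finite sequence `Γ = Γ₁, …, Γₙ = Δ` of consecutive derivation steps. -/
def RDeriv {Φ : Type*} (AS : Set (Multiset Φ × Multiset Φ)) (Γ Δ : Multiset Φ) : Prop :=
  Relation.ReflTransGen (Step AS) Γ Δ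

/-- `Γ ⊢_AS Δ`: there is a derivation of `Δ` from `Γ` in `AS`, i.e., a finite
sequence `Γ = Γ₁, …, Γₙ` of consecutive derivation steps with `Δ ≤ Γₙ`. -/
def Deriv {Φ : Type*} (AS : Set (Multiset Φ × Multiset Φ)) (Γ Δ : Multiset Φ) : Prop :=
  ∃ Θ : Multiset Φ, Relation.ReflTransGen (Step AS) Γ Θ ∧ Δ ≤ Θ

lemma step_add {Φ : Type*} (AS : Set (Multiset Φ × Multiset Φ)) {X Y : Multiset Φ}
    (E : Multiset Φ) (h : Step AS X Y) : Step AS (X + E) (Y + E) := by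
  obtain ⟨Ψ, Ψ', Z, hmem, rfl, rfl⟩ := h
  exact ⟨Ψ, Ψ', Z + E, hmem, by rw [add_right_comm], by rw [add_right_comm]⟩

lemma rderiv_add {Φ : Type*} (AS : Set (Multiset Φ × Multiset Φ)) {X Y : Multiset Φ}
    (E : Multiset Φ) (h : RDeriv AS X Y) : RDeriv AS (X + E) (Y + E) := by
  induction h with
  | refl => exact Relation.ReflTransGen.refl
  | tail _ hstep ih => exact ih.tail (step_add AS E hstep)

lemma rderiv_least {Φ : Type*} (AS : Set (Multiset Φ × Multiset Φ))
    (S : Multiset Φ → Multiset Φ → Prop) (hS : IsSymConseq S)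
    (hAS : ∀ Γ Δ : Multiset Φ, (Γ, Δ) ∈ AS → S Γ Δ)
    {Γ Δ : Multiset Φ} (h : RDeriv AS Γ Δ) : S Γ Δ := by
  obtain ⟨hrefl, htrans, hcompat⟩ := hS
  induction h with
  | refl => exact hrefl Γ
  | tail hxy hstep ih =>
    obtain ⟨Ψ, Ψ', Z, hmem, rfl, rfl⟩ := hstep
    exact htrans _ _ _ ih (by
      have := hcompat _ _ Z (hAS _ _ hmem)
      rwa [add_comm Ψ Z, add_comm Ψ' Z] at this)

/-- `⊢ʳ_AS` is the least symmetric consequence relation containing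
the symmetric axiomatic system `AS`, and `⊢_AS` is the least monotone symmetric
consequence relation containing `AS`. -/
theorem deriv_least_sym_conseq {Φ : Type*} (AS : Set (Multiset Φ × Multiset Φ)) :
    (IsSymConseq (RDeriv AS) ∧
      (∀ Γ Δ : Multiset Φ, (Γ, Δ) ∈ AS → RDeriv AS Γ Δ) ∧
      (∀ S : Multiset Φ → Multiset Φ → Prop, IsSymConseq S →
        (∀ Γ Δ : Multiset Φ, (Γ, Δ) ∈ AS → S Γ Δ) →
        ∀ Γ Δ : Multiset Φ, RDeriv AS Γ Δ → S Γ Δ)) ∧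
    (IsSymConseq (Deriv AS) ∧ IsSymMonotone (Deriv AS) ∧
      (∀ Γ Δ : Multiset Φ, (Γ, Δ) ∈ AS → Deriv AS Γ Δ) ∧
      (∀ S : Multiset Φ → Multiset Φ → Prop, IsSymConseq S → IsSymMonotone S →
        (∀ Γ Δ : Multiset Φ, (Γ, Δ) ∈ AS → S Γ Δ) →
        ∀ Γ Δ : Multiset Φ, Deriv AS Γ Δ → S Γ Δ)) := by
  refine ⟨⟨⟨fun Γ => .refl, fun Γ Δ Ψ h1 h2 => h1.trans h2,
      fun Γ Δ Ψ h => rderiv_add AS Ψ h⟩,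
      fun Γ Δ h => Relation.ReflTransGen.single ⟨Γ, Δ, 0, h, by simp, by simp⟩,
      fun S hS hAS Γ Δ h => rderiv_least AS S hS hAS h⟩,
    ⟨⟨fun Γ => ⟨Γ, .refl, le_refl Γ⟩,
      ?_,
      fun Γ Δ Ψ ⟨Θ, hd, hle⟩ => ⟨Θ + Ψ, rderiv_add AS Ψ hd, add_le_add_left hle Ψ⟩⟩,
      fun Γ Δ Ψ ⟨Θ, hd, hle⟩ => ⟨Θ + Ψ, rderiv_add AS Ψ hd, le_trans hle (le_add_right le_rfl)⟩,
      fun Γ Δ h => ⟨Δ, Relation.ReflTransGen.single ⟨Γ, Δ, 0, h, by simp, by simp⟩, le_refl Δ⟩,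
      ?_⟩⟩
  · rintro Γ Δ Ψ ⟨Θ, hd, hle⟩ ⟨Θ', hd', hle'⟩
    obtain ⟨E, rfl⟩ := Multiset.le_iff_exists_add.mp hle
    exact ⟨Θ' + E, hd.trans (rderiv_add AS E hd'), le_trans hle' (le_add_right le_rfl)⟩
  · rintro S ⟨hrefl, htrans, hcompat⟩ hmono hAS Γ Δ ⟨Θ, hd, hle⟩
    obtain ⟨E, rfl⟩ := Multiset.le_iff_exists_add.mp hle
    exact htrans _ _ _ (rderiv_least AS S ⟨hrefl, htrans, hcompat⟩ hAS hd)
      (hmono Δ Δ E (hrefl Δ))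
end

section
/- Let AS be a single-conclusion symmetric axiomatic system on a type Φ of formulas (every consecution of AS has a single-formula conclusion multiset), let Γ ⊢ʳ_AS Δ, and let φ ∈ Δ. Then there exist finite multisets Γ^φ and Γ^r with Γ^φ ⊎ Γ^r = Γ such that Γ^φ ⊢ʳ_AS [φ] and Γ^r ⊢ʳ_AS Δ − [φ]. -/
/-- let `AS` be a single-conclusion symmetric axiomatic system
(every consecution of `AS` has a singleton conclusion multiset), let
`Γ ⊢ʳ_AS Δ` and `φ ∈ Δ` (here `Δ = Δ' ⊎ [φ]`, so that `Δ' = Δ − [φ]`). Then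
`Γ` splits as `Γ^φ ⊎ Γ^r` with `Γ^φ ⊢ʳ_AS [φ]` and `Γ^r ⊢ʳ_AS Δ − [φ]`. -/
theorem rderiv_split {Φ : Type*} (AS : Set (Multiset Φ × Multiset Φ))
    (hsc : ∀ p ∈ AS, ∃ ψ : Φ, p.2 = {ψ})
    (Γ Δ Δ' : Multiset Φ) (φ : Φ) (hΔ : Δ = Δ' + {φ})
    (h : RDeriv AS Γ Δ) :
    ∃ Γφ Γr : Multiset Φ, Γφ + Γr = Γ ∧ RDeriv AS Γφ {φ} ∧ RDeriv AS Γr Δ' := by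
  classical
  induction h using Relation.ReflTransGen.head_induction_on with
  | refl =>
    exact ⟨{φ}, Δ', by simp [hΔ, add_comm], Relation.ReflTransGen.refl,
      Relation.ReflTransGen.refl⟩
  | head hstep _ ih =>
    obtain ⟨Ψ, Ψ', Z, hmem, hX, hY⟩ := hstep
    obtain ⟨ψ, hψ⟩ := hsc _ hmem
    simp only at hψ
    subst hψ hX hY
    obtain ⟨Γφ, Γr, hsum, hφ, hr⟩ := ih
    by_cases hm : ψ ∈ Γφ
    · obtain ⟨W, hW⟩ : ∃ W, Γφ = W + {ψ} :=
        ⟨Γφ.erase ψ, by rw [add_comm, Multiset.singleton_add, Multiset.cons_erase hm]⟩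
      have hZ : W + Γr = Z := by
        have h1 : W + Γr + {ψ} = Z + {ψ} := by
          rw [← hsum, hW]; abel
        exact add_right_cancel h1
      refine ⟨W + Ψ, Γr, by rw [← hZ]; abel, ?_, hr⟩
      exact Relation.ReflTransGen.head ⟨Ψ, {ψ}, W, hmem, rfl, hW ▸ rfl⟩ hφ
    · have hm' : ψ ∈ Γr := by
        have : ψ ∈ Γφ + Γr := by rw [hsum]; simp
        rcases Multiset.mem_add.1 this with h' | h'
        · exact absurd h' hm
        · exact h'
      obtain ⟨W, hW⟩ : ∃ W, Γr = W + {ψ} :=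
        ⟨Γr.erase ψ, by rw [add_comm, Multiset.singleton_add, Multiset.cons_erase hm']⟩
      have hZ : Γφ + W = Z := by
        have h1 : Γφ + W + {ψ} = Z + {ψ} := by
          rw [← hsum, hW]; abel
        exact add_right_cancel h1
      refine ⟨Γφ, W + Ψ, by rw [← hZ]; abel, hφ, ?_⟩
      exact Relation.ReflTransGen.head ⟨Ψ, {ψ}, W, hmem, rfl, hW ▸ rfl⟩ hr
end
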